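/- arXiv:1112.5421 — 2 statements merged into one kernel-verified Lean document; each statement's English description precedes it below -/
import Mathlib

section
/- Fix a vertex v₀ of G. The set of divisors of the form v ↦ indeg_O(v) - 1, as O ranges over the G-semiorientations in which v₀ is a source (every edge of G incident to v₀ is oriented by O away from v₀), equals the set of quasi-superstable divisors c on G such that c(v₀) = -1 and c(v) ≥ 0 for every vertex v adjacent to v₀. -/
namespace Soap

variable {V : Type*} {W : Type*}

/-- A partial orientation of `G`: a relation `O` such that `O u v` implies `{u,v}` is an
edge and the reverse pair is not in `O`. -/
def IsPartialOrientation (G : SimpleGraph V) (O : V → V → Prop) : Prop :=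
  ∀ u v, O u v → G.Adj u v ∧ ¬ O v u

/-- The edge `{u,v}` of `G` is blank for the partial orientation `O`. -/
def IsBlank (G : SimpleGraph V) (O : V → V → Prop) (u v : V) : Prop :=
  G.Adj u v ∧ ¬ O u v ∧ ¬ O v u

/-- A `G`-semiorientation: a partial orientation such that every potential cycle
(a cycle of `G`, here traversed as `c : ZMod n → V`, none of whose edges is oriented
against the traversal) has strictly more blank edges than oriented edges. -/
def IsSemiorientation (G : SimpleGraph V) (O : V → V → Prop) : Prop :=
  IsPartialOrientation G O ∧
  ∀ (n : ℕ) (c : ZMod n → V), 3 ≤ n → Function.Injective c →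
    (∀ i, G.Adj (c i) (c (i + 1))) →
    (∀ i, ¬ O (c (i + 1)) (c i)) →
    {i : ZMod n | O (c i) (c (i + 1))}.ncard <
      {i : ZMod n | IsBlank G O (c i) (c (i + 1))}.ncard

/-- A semiorder (unit interval order) given by its strict order relation `lt`. -/
def IsSemiorder (lt : V → V → Prop) : Prop :=
  ∃ t : V → ℝ, ∀ u v, lt u v ↔ t u + 1 < t v

/-- Compatibility of a (semi)order `lt` and a partial orientation `O`:
for every edge `{u,v}`, `u < v` iff `(u,v) ∈ O`. -/
def Compatible (G : SimpleGraph V) (lt : V → V → Prop) (O : V → V → Prop) : Prop :=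
  ∀ u v, G.Adj u v → (lt u v ↔ O u v)

/-- Indegree of a vertex with respect to a partial orientation. -/
noncomputable def indeg (O : V → V → Prop) (v : V) : ℕ := {u | O u v}.ncard

/-- `n_P(v)`: the number of vertices `u` with `u < v` and `{u,v}` an edge of `G`. -/
noncomputable def nP (G : SimpleGraph V) (lt : V → V → Prop) (v : V) : ℕ :=
  {u | lt u v ∧ G.Adj u v}.ncard

/-- Degree of a vertex in a graph. -/
noncomputable def vdeg (H : SimpleGraph W) (v : W) : ℕ := {u | H.Adj v u}.ncard

/-- A configuration `c` on the graph `H` with sink `q` is superstable: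
`c ≥ 0` off the sink, and no nonempty set `X` of nonsink vertices can be fired legally,
i.e. `c - Δ̃·1_X ≥ 0` fails (coordinatewise off the sink), where
`(Δ̃·1_X)_v = deg(v)·1_X(v) - #{u ∈ X : u ∼ v}`. -/
def Superstable (H : SimpleGraph W) (q : W) (c : W → ℤ) : Prop :=
  (∀ v, v ≠ q → 0 ≤ c v) ∧
  ¬ ∃ X : Set W, X.Nonempty ∧ q ∉ X ∧
    ∀ v, v ≠ q →
      0 ≤ c v - X.indicator (fun u => (vdeg H u : ℤ)) v + ({u | u ∈ X ∧ H.Adj v u}.ncard : ℤ)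

/-- `K(G)`: the graph `G` with a new vertex `none` adjoined, joined to every vertex of `G`. -/
def KG (G : SimpleGraph V) : SimpleGraph (Option V) where
  Adj x y := x ≠ y ∧ ∀ u v, x = some u → y = some v → G.Adj u v
  symm := by
    constructor
    rintro x y ⟨hne, h⟩
    exact ⟨hne.symm, fun u v hu hv => (h v u hv hu).symm⟩
  loopless := by constructor; rintro x ⟨hne, -⟩; exact hne rfl

/-- A divisor `c : V → ℤ` on `G` is quasi-superstable if the configuration
`v ↦ c v + 1` on `K(G)` (with sink the new vertex) is superstable. -/
def QuasiSuperstable (G : SimpleGraph V) (c : V → ℤ) : Prop :=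
  Superstable (KG G) none (fun x => x.elim 0 (fun v => c v + 1))

/-- An acyclic orientation of `G`: a partial orientation in which every edge is
oriented and which contains no directed cycle. -/
def IsAcyclicOrientation (G : SimpleGraph V) (O : V → V → Prop) : Prop :=
  IsPartialOrientation G O ∧ (∀ u v, G.Adj u v → O u v ∨ O v u) ∧
  ¬ ∃ (n : ℕ) (c : ZMod n → V), 0 < n ∧ Function.Injective c ∧ ∀ i, O (c i) (c (i + 1))

/-- The union of the hyperplanes `x u - x v = 1` of the `G`-semiorder arrangement. -/
def hyperplanesUnion (G : SimpleGraph V) : Set (V → ℝ) :=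
  {x | ∃ u v, G.Adj u v ∧ x u - x v = 1}

/-- The regions of the `G`-semiorder arrangement: connected components of the
complement of the union of its hyperplanes. -/
def Regions (G : SimpleGraph V) : Set (Set (V → ℝ)) :=
  {r | ∃ x, x ∉ hyperplanesUnion G ∧ r = connectedComponentIn (hyperplanesUnion G)ᶜ x}

/-- The candidate region attached to a partial orientation `O`. -/
def rho (G : SimpleGraph V) (O : V → V → Prop) : Set (V → ℝ) :=
  {x | (∀ u v, O u v → x v - x u > 1) ∧ (∀ u v, IsBlank G O u v → |x u - x v| < 1)}

/-- `K(G)₀`: the graph `G` with an edge `{v, v₀}` added for each vertex `v ≠ v₀`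
not already adjacent to `v₀`. -/
def KG0 (G : SimpleGraph V) (v₀ : V) : SimpleGraph V where
  Adj u v := G.Adj u v ∨ (u ≠ v ∧ (u = v₀ ∨ v = v₀))
  symm := by
    constructor
    rintro u v (h | ⟨hne, h⟩)
    · exact Or.inl h.symm
    · exact Or.inr ⟨hne.symm, h.symm⟩
  loopless := by
    constructor
    rintro v (h | ⟨hne, -⟩)
    · exact G.irrefl h
    · exact hne rfl

/-- The union of the hyperplanes of the `(G,v₀)`-semiorder arrangement. -/
def hyperplanesUnion0 (G : SimpleGraph V) (v₀ : V) : Set ({v : V // v ≠ v₀} → ℝ) :=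
  {x | ∃ u v : {v : V // v ≠ v₀}, G.Adj u.1 v.1 ∧ x u - x v = 1}

/-- The regions of the `(G,v₀)`-semiorder arrangement. -/
def Regions0 (G : SimpleGraph V) (v₀ : V) : Set (Set ({v : V // v ≠ v₀} → ℝ)) :=
  {r | ∃ x, x ∉ hyperplanesUnion0 G v₀ ∧
    r = connectedComponentIn (hyperplanesUnion0 G v₀)ᶜ x}

/-- The candidate region attached to a partial orientation `O`, in the sink context. -/
def rho0 (G : SimpleGraph V) (v₀ : V) (O : V → V → Prop) :
    Set ({v : V // v ≠ v₀} → ℝ) :=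
  {x | (∀ u v : {v : V // v ≠ v₀}, O u.1 v.1 → x v - x u > 1) ∧
    (∀ u v : {v : V // v ≠ v₀}, IsBlank G O u.1 v.1 → |x u - x v| < 1)}

-- ### helpers

open Finset

lemma ncard_filter_eq {α : Type*} [Fintype α] (P : α → Prop) [DecidablePred P] :
    {x | P x}.ncard = (Finset.univ.filter P).card := by
  rw [Set.ncard_eq_toFinset_card']
  congr 1
  ext x
  simp

lemma KG_adj_some_some (G : SimpleGraph V) (u v : V) :
    (KG G).Adj (some u) (some v) ↔ G.Adj u v := by
  constructor
  · rintro ⟨-, h⟩; exact h u v rfl rfl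
  · intro h
    refine ⟨?_, ?_⟩
    · intro he
      obtain rfl : u = v := Option.some.inj he
      exact G.irrefl h
    · rintro a b ha hb
      obtain rfl : u = a := Option.some.inj ha
      obtain rfl : v = b := Option.some.inj hb
      exact h

lemma KG_adj_some_none (G : SimpleGraph V) (v : V) :
    (KG G).Adj (some v) none :=
  ⟨Option.some_ne_none v, fun _ _ _ hb => by cases hb⟩

lemma vdeg_KG_some [Fintype V] (G : SimpleGraph V) (w : V) :
    (vdeg (KG G) (some w) : ℤ) = ({z | G.Adj w z}.ncard : ℤ) + 1 := by
  have hset : {u : Option V | (KG G).Adj (some w) u}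
      = insert none (some '' {z | G.Adj w z}) := by
    ext u
    cases u with
    | none => simp [KG_adj_some_none]
    | some z => simp [KG_adj_some_some]
  have : vdeg (KG G) (some w) = {z | G.Adj w z}.ncard + 1 := by
    rw [vdeg, hset, Set.ncard_insert_of_notMem (by simp),
      Set.ncard_image_of_injective _ (Option.some_injective V)]
  rw [this]; push_cast; ring

lemma ncard_X_adj [Fintype V] (G : SimpleGraph V) (X : Set (Option V)) (hX : none ∉ X) (w : V) :
    {u | u ∈ X ∧ (KG G).Adj (some w) u}.ncard = {z | some z ∈ X ∧ G.Adj w z}.ncard := by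
  have hset : {u | u ∈ X ∧ (KG G).Adj (some w) u} = some '' {z | some z ∈ X ∧ G.Adj w z} := by
    ext u
    cases u with
    | none => simp [hX]
    | some z => simp [KG_adj_some_some]
  rw [hset, Set.ncard_image_of_injective _ (Option.some_injective V)]

lemma cyc_exp (m a : ℕ) (h : a < m) (h3 : 3 ≤ m) :
    ((m - (a+1) % m) % m + 1) % m = (m - a) % m := by
  rcases Nat.lt_or_ge (a+1) m with h1 | h1
  · rw [Nat.mod_eq_of_lt h1]
    rw [Nat.mod_eq_of_lt (show m - (a+1) < m by omega)]
    have he : m - (a+1) + 1 = m - a := by omega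
    rw [he]
  · have hma : a + 1 = m := by omega
    have h0 : (a+1) % m = 0 := by rw [hma, Nat.mod_self]
    rw [h0, Nat.sub_zero, Nat.mod_self, Nat.zero_add,
      Nat.mod_eq_of_lt (by omega), Nat.mod_eq_of_lt (by omega)]
    omega

lemma no_internal_cycle [Fintype V] (G : SimpleGraph V) (O : V → V → Prop)
    (hO : IsSemiorientation G O)
    (X : Set V) (hne : X.Nonempty)
    (hstep : ∀ v ∈ X, ∃ u, u ∈ X ∧ O u v) : False := by
  classical
  obtain ⟨hPO', hcyc⟩ := hO
  have hPO : ∀ u v, O u v → G.Adj u v ∧ ¬ O v u := hPO'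
  have hg : ∃ g : V → V, ∀ v ∈ X, g v ∈ X ∧ O (g v) v := by
    choose f hf using hstep
    refine ⟨fun v => if h : v ∈ X then f v h else v, fun v hv => ?_⟩
    simp only [dif_pos hv]
    exact hf v hv
  obtain ⟨g, hgX⟩ := hg
  obtain ⟨x₀, hx₀⟩ := hne
  have horb : ∀ k, g^[k] x₀ ∈ X := by
    intro k
    induction k with
    | zero => simpa
    | succ k ih => rw [Function.iterate_succ_apply']; exact (hgX _ ih).1
  obtain ⟨A, B, hAB, heq⟩ := Finite.exists_ne_map_eq_of_infinite (fun k : ℕ => g^[k] x₀)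
  wlog hlt : A < B generalizing A B
  · exact this B A hAB.symm heq.symm (by omega)
  set y := g^[A] x₀ with hy
  have hyper : Function.IsPeriodicPt g (B - A) y := by
    show g^[B-A] y = y
    rw [hy, ← Function.iterate_add_apply]
    rw [show B - A + A = B by omega]
    exact heq.symm
  have hyX : ∀ k, g^[k] y ∈ X := by
    intro k; rw [hy, ← Function.iterate_add_apply]; exact horb _
  set m := Function.minimalPeriod g y with hm
  have hm0 : 0 < m := hyper.minimalPeriod_pos (by omega)
  have hstep' : ∀ k, O (g^[k+1] y) (g^[k] y) := by
    intro k
    rw [Function.iterate_succ_apply']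
    exact (hgX _ (hyX k)).2
  have hm1 : m ≠ 1 := by
    intro h1
    have : g^[1] y = y := by rw [← h1, hm]; exact Function.iterate_minimalPeriod
    have hOy := hstep' 0
    simp only [Function.iterate_zero_apply] at hOy
    rw [show g^[0+1] y = y from this] at hOy
    exact G.irrefl (hPO _ _ hOy).1
  have hm2 : m ≠ 2 := by
    intro h2
    have hper : g^[2] y = y := by rw [← h2, hm]; exact Function.iterate_minimalPeriod
    have hO1 := hstep' 0
    have hO2 := hstep' 1
    simp only [Function.iterate_zero_apply] at hO1
    rw [show (1:ℕ)+1 = 2 from rfl, hper] at hO2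
    exact (hPO _ _ hO1).2 hO2
  have hm3 : 3 ≤ m := by omega
  haveI : NeZero m := ⟨by omega⟩
  set cyc : ZMod m → V := fun i => g^[(m - i.val) % m] y with hcycdef
  have hval : ∀ i : ZMod m, i.val < m := fun i => ZMod.val_lt i
  have hinj : Function.Injective cyc := by
    intro i j hij
    have hi : (m - i.val) % m < m := Nat.mod_lt _ hm0
    have hj : (m - j.val) % m < m := Nat.mod_lt _ hm0
    have hthis := Function.iterate_injOn_Iio_minimalPeriod (f := g) (x := y) hi hj hij
    have hiv := hval i
    have hjv := hval j
    have hieq : i.val = j.val := by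
      rcases Nat.eq_zero_or_pos i.val with h0 | h0 <;>
      rcases Nat.eq_zero_or_pos j.val with h0' | h0'
      · omega
      · rw [h0, Nat.sub_zero, Nat.mod_self, Nat.mod_eq_of_lt (by omega)] at hthis; omega
      · rw [h0', Nat.sub_zero, Nat.mod_self, Nat.mod_eq_of_lt (by omega)] at hthis; omega
      · rw [Nat.mod_eq_of_lt (by omega), Nat.mod_eq_of_lt (by omega)] at hthis; omega
    exact ZMod.val_injective m hieq
  have hfwd : ∀ i : ZMod m, O (cyc i) (cyc (i+1)) := by
    intro i
    have hkey : cyc i = g^[(m - (i+1).val) % m + 1] y := by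
      rw [hcycdef]
      simp only
      rw [← Function.iterate_mod_minimalPeriod_eq (n := (m - (i+1).val) % m + 1), ← hm]
      congr 1
      have hv1 : (i+1).val = (i.val + 1) % m := by
        rw [ZMod.val_add, ZMod.val_one_eq_one_mod,
          Nat.mod_eq_of_lt (show (1:ℕ) < m by omega)]
      rw [hv1]
      exact (cyc_exp m i.val (hval i) hm3).symm
    rw [hkey]
    exact hstep' _
  have hadj : ∀ i : ZMod m, G.Adj (cyc i) (cyc (i+1)) := fun i => (hPO _ _ (hfwd i)).1
  have hrev : ∀ i : ZMod m, ¬ O (cyc (i+1)) (cyc i) := fun i => (hPO _ _ (hfwd i)).2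
  have hlt2 := hcyc m cyc hm3 hinj hadj hrev
  have hblank : {i : ZMod m | IsBlank G O (cyc i) (cyc (i+1))} = ∅ := by
    ext i
    simp only [Set.mem_setOf_eq, Set.mem_empty_iff_false, iff_false]
    rintro ⟨-, h2, -⟩
    exact h2 (hfwd i)
  rw [hblank] at hlt2
  simp at hlt2

lemma dir1_main [Fintype V] (G : SimpleGraph V) (v₀ : V) (O : V → V → Prop)
    (hO : IsSemiorientation G O) (hsrc : ∀ v, G.Adj v₀ v → O v₀ v) :
    QuasiSuperstable G (fun v => (indeg O v : ℤ) - 1) ∧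
      ((indeg O v₀ : ℤ) - 1 = -1) ∧
      ∀ v, G.Adj v v₀ → 0 ≤ (indeg O v : ℤ) - 1 := by
  classical
  have hPO : ∀ u v, O u v → G.Adj u v ∧ ¬ O v u := hO.1
  refine ⟨?_, ?_, ?_⟩
  · constructor
    · intro x hx
      match x with
      | none => exact absurd rfl hx
      | some v =>
        simp only [Option.elim]
        have : (0:ℤ) ≤ (indeg O v : ℤ) := Int.natCast_nonneg _
        linarith
    · rintro ⟨X, hXne, hXq, hfire⟩
      set X' : Set V := {z | some z ∈ X} with hX'
      have hX'ne : X'.Nonempty := by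
        obtain ⟨x, hx⟩ := hXne
        match x with
        | none => exact absurd hx hXq
        | some z => exact ⟨z, hx⟩
      apply no_internal_cycle G O hO X' hX'ne
      intro w hw
      by_contra hcon
      push_neg at hcon
      have hfw := hfire (some w) (by simp)
      simp only [Option.elim] at hfw
      rw [Set.indicator_of_mem (by exact hw)] at hfw
      rw [vdeg_KG_some] at hfw
      rw [ncard_X_adj G X hXq w] at hfw
      -- hfw : 0 ≤ (indeg O w - 1 + 1) - (deg + 1) + nIn
      set deg := {z | G.Adj w z}.ncard with hdeg
      set nIn := {z | some z ∈ X ∧ G.Adj w z}.ncard with hnIn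
      have hsub1 : {z | some z ∈ X ∧ G.Adj w z} ⊆ {z | G.Adj w z} := fun z hz => hz.2
      have hnIn_le : nIn ≤ deg := Set.ncard_le_ncard hsub1 (Set.toFinite _)
      have hsub2 : {u | O u w} ⊆ {z | G.Adj w z} \ {z | some z ∈ X ∧ G.Adj w z} := by
        intro u hu
        have hadj : G.Adj w u := ((hPO _ _ hu).1).symm
        refine ⟨hadj, ?_⟩
        rintro ⟨huX, -⟩
        exact hcon u huX hu
      have hindeg_le : indeg O w ≤ deg - nIn := by
        rw [indeg, hdeg, hnIn]
        calc {u | O u w}.ncard ≤ ({z | G.Adj w z} \ {z | some z ∈ X ∧ G.Adj w z}).ncard :=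
              Set.ncard_le_ncard hsub2 (Set.toFinite _)
          _ = _ := Set.ncard_diff hsub1 (Set.toFinite _)
      have hkey : (deg : ℤ) + 1 ≤ (indeg O w : ℤ) + nIn := by linarith
      have hkeyN : deg + 1 ≤ indeg O w + nIn := by exact_mod_cast hkey
      omega
  · have : {u | O u v₀} = ∅ := by
      ext u
      simp only [Set.mem_setOf_eq, Set.mem_empty_iff_false, iff_false]
      intro hu
      exact (hPO _ _ hu).2 (hsrc u ((hPO _ _ hu).1.symm))
    rw [indeg, this]
    simp
  · intro v hadj
    have h1 : 1 ≤ indeg O v := by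
      rw [indeg]
      have : v₀ ∈ {u | O u v} := hsrc v hadj.symm
      have hpos : 0 < {u | O u v}.ncard := by
        rw [Set.ncard_pos (Set.toFinite _)]
        exact ⟨v₀, this⟩
      omega
    have : (1:ℤ) ≤ (indeg O v : ℤ) := by exact_mod_cast h1
    linarith

lemma isSemiorientation_of_t [Fintype V] (G : SimpleGraph V) (t : V → ℝ) :
    IsSemiorientation G (fun u v => G.Adj u v ∧ t u + 1 < t v) := by
  classical
  set O : V → V → Prop := fun u v => G.Adj u v ∧ t u + 1 < t v with hOdef
  constructor
  · rintro u v ⟨h1, h2⟩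
    refine ⟨h1, ?_⟩
    rintro ⟨-, h3⟩
    linarith
  · intro n cyc hn hinj hadj hrev
    haveI : NeZero n := ⟨by omega⟩
    rw [Set.ncard_eq_toFinset_card', Set.ncard_eq_toFinset_card']
    rw [Set.toFinset_setOf, Set.toFinset_setOf]
    set SO := Finset.univ.filter fun i : ZMod n => O (cyc i) (cyc (i+1)) with hSO
    have hSB : (Finset.univ.filter fun i : ZMod n => IsBlank G O (cyc i) (cyc (i+1)))
        = Finset.univ.filter fun i : ZMod n => ¬ O (cyc i) (cyc (i+1)) := by
      apply Finset.filter_congr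
      intro i _
      constructor
      · exact fun h => h.2.1
      · exact fun h => ⟨hadj i, h, hrev i⟩
    rw [hSB]
    have hsum : ∑ i : ZMod n, (t (cyc (i+1)) - t (cyc i)) = 0 := by
      rw [Finset.sum_sub_distrib]
      rw [show ∑ i : ZMod n, t (cyc (i+1)) = ∑ i : ZMod n, t (cyc i) from
        Fintype.sum_equiv (Equiv.addRight (1 : ZMod n)) _ _ (fun i => by simp)]
      ring
    have hsplit : ∑ i ∈ SO, (t (cyc (i+1)) - t (cyc i))
        + ∑ i ∈ Finset.univ.filter (fun i : ZMod n => ¬ O (cyc i) (cyc (i+1))),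
          (t (cyc (i+1)) - t (cyc i)) = 0 := by
      rw [hSO, Finset.sum_filter_add_sum_filter_not]; exact hsum
    by_cases hemp : SO.Nonempty
    · have h1 : (SO.card : ℝ) < ∑ i ∈ SO, (t (cyc (i+1)) - t (cyc i)) := by
        have hlt : ∀ i ∈ SO, (1:ℝ) < t (cyc (i+1)) - t (cyc i) := by
          intro i hi
          rw [hSO, Finset.mem_filter] at hi
          have h2 := hi.2.2
          linarith
        have := Finset.sum_lt_sum_of_nonempty hemp hlt
        simpa using this
      have h2 : -(((Finset.univ.filter (fun i : ZMod n => ¬ O (cyc i) (cyc (i+1)))).card : ℝ))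
          ≤ ∑ i ∈ Finset.univ.filter (fun i : ZMod n => ¬ O (cyc i) (cyc (i+1))),
            (t (cyc (i+1)) - t (cyc i)) := by
        have hb : ∀ i ∈ Finset.univ.filter (fun i : ZMod n => ¬ O (cyc i) (cyc (i+1))),
            (-1 : ℝ) ≤ t (cyc (i+1)) - t (cyc i) := by
          intro i hi
          have h3 : ¬ (t (cyc (i+1)) + 1 < t (cyc i)) :=
            fun hlt => hrev i ⟨(hadj i).symm, hlt⟩
          linarith
        calc -(((Finset.univ.filter (fun i : ZMod n => ¬ O (cyc i) (cyc (i+1)))).card : ℝ))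
            = ∑ _i ∈ Finset.univ.filter (fun i : ZMod n => ¬ O (cyc i) (cyc (i+1))), (-1 : ℝ) := by
              simp
          _ ≤ _ := Finset.sum_le_sum hb
      have hfin : (SO.card : ℝ)
          < ((Finset.univ.filter (fun i : ZMod n => ¬ O (cyc i) (cyc (i+1)))).card : ℝ) := by
        linarith
      exact_mod_cast hfin
    · rw [Finset.not_nonempty_iff_eq_empty] at hemp
      rw [hemp]
      have hall : Finset.univ.filter (fun i : ZMod n => ¬ O (cyc i) (cyc (i+1))) = Finset.univ := by
        rw [Finset.filter_eq_self]
        intro i _ hOi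
        have hmem : i ∈ SO := by
          rw [hSO]
          exact Finset.mem_filter.mpr ⟨Finset.mem_univ i, hOi⟩
        rw [hemp] at hmem
        exact absurd hmem (Finset.notMem_empty i)
      rw [hall]
      simp only [Finset.card_empty, Finset.card_univ, ZMod.card]
      omega

section Construction

variable {V₁ : Type*} [Fintype V₁] [DecidableEq V₁]

/-- Invariant for the burning construction. -/
structure BInv (G : SimpleGraph V₁) [DecidableRel G.Adj] (c : V₁ → ℤ) (v₀ : V₁)
    (B : Finset V₁) (t : V₁ → ℝ) : Prop where
  mem0 : v₀ ∈ B
  inj : ∀ u ∈ B, ∀ v ∈ B, t u = t v → u = v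
  tmin : ∀ v ∈ B, t v₀ ≤ t v
  count : ∀ v ∈ B,
    ((B.filter (fun u => G.Adj u v ∧ t u + 1 < t v)).card : ℤ) = c v + 1
  star : ∀ v ∉ B, ∀ w ∈ B,
    ((B.filter (fun u => G.Adj u v ∧ t u + 1 ≤ t w)).card : ℤ) ≤ c v + 1

lemma cpos_of_quasi (G : SimpleGraph V₁) (c : V₁ → ℤ) (hQ : QuasiSuperstable G c) :
    ∀ v, (0:ℤ) ≤ c v + 1 := by
  intro v
  have := hQ.1 (some v) (by simp)
  simpa using this

lemma exists_eligible (G : SimpleGraph V₁) [DecidableRel G.Adj] (c : V₁ → ℤ)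
    (hQ : QuasiSuperstable G c) (B : Finset V₁) (hBne : B ≠ Finset.univ) :
    ∃ w, w ∉ B ∧ (c w + 1 : ℤ) ≤ ((B.filter (fun u => G.Adj u w)).card : ℤ) := by
  by_contra hcon
  push_neg at hcon
  apply hQ.2
  refine ⟨{x : Option V₁ | ∃ z, x = some z ∧ z ∉ B}, ?_, ?_, ?_⟩
  · have : ∃ z, z ∉ B := by
      by_contra hall
      push_neg at hall
      exact hBne (Finset.eq_univ_iff_forall.mpr hall)
    obtain ⟨z, hz⟩ := this
    exact ⟨some z, z, rfl, hz⟩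
  · rintro ⟨z, hz, -⟩
    cases hz
  · intro x hx
    match x with
    | none => exact absurd rfl hx
    | some w =>
      simp only [Option.elim]
      set X : Set (Option V₁) := {x : Option V₁ | ∃ z, x = some z ∧ z ∉ B} with hXdef
      have hXnone : none ∉ X := by rintro ⟨z, hz, -⟩; cases hz
      rw [ncard_X_adj G X hXnone w]
      have hsetz : {z | some z ∈ X ∧ G.Adj w z} = {z | z ∉ B ∧ G.Adj w z} := by
        ext z
        simp only [Set.mem_setOf_eq, hXdef]
        constructor
        · rintro ⟨⟨z', hz', hz'B⟩, hadj⟩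
          obtain rfl : z = z' := Option.some.inj hz'
          exact ⟨hz'B, hadj⟩
        · rintro ⟨hzB, hadj⟩
          exact ⟨⟨z, rfl, hzB⟩, hadj⟩
      rw [hsetz]
      by_cases hw : w ∈ B
      · rw [Set.indicator_of_notMem]
        · have h1 : (0:ℤ) ≤ c w + 1 := cpos_of_quasi G c hQ w
          have h2 : (0:ℤ) ≤ ({z | z ∉ B ∧ G.Adj w z}.ncard : ℤ) := Int.natCast_nonneg _
          linarith
        · rintro ⟨z, hz, hzB⟩
          obtain rfl : w = z := Option.some.inj hz
          exact hzB hw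
      · rw [Set.indicator_of_mem (by exact ⟨w, rfl, hw⟩)]
        rw [vdeg_KG_some]
        -- counting: deg = nIn + nOut
        have hcount : {z | G.Adj w z}.ncard = {z | z ∉ B ∧ G.Adj w z}.ncard
            + (B.filter (fun u => G.Adj u w)).card := by
          rw [ncard_filter_eq, ncard_filter_eq]
          have hBfilter : (B.filter (fun u => G.Adj u w)).card
              = (Finset.univ.filter (fun z => z ∈ B ∧ G.Adj w z)).card := by
            congr 1
            ext z
            simp [G.adj_comm]
          rw [hBfilter]
          rw [← Finset.card_union_of_disjoint]
          · congr 1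
            ext z
            simp only [Finset.mem_union, Finset.mem_filter, Finset.mem_univ, true_and]
            by_cases hz : z ∈ B <;> simp [hz]
          · rw [Finset.disjoint_left]
            rintro z hz1 hz2
            rw [Finset.mem_filter] at hz1 hz2
            exact hz1.2.1 hz2.2.1
        have hlt := hcon w hw
        have h1 : ((B.filter (fun u => G.Adj u w)).card : ℤ) ≤ c w := by linarith
        have h2 : ({z | G.Adj w z}.ncard : ℤ) = ({z | z ∉ B ∧ G.Adj w z}.ncard : ℤ)
            + ((B.filter (fun u => G.Adj u w)).card : ℤ) := by exact_mod_cast hcount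
        linarith

set_option maxHeartbeats 1000000 in
lemma exists_extend (G : SimpleGraph V₁) [DecidableRel G.Adj] (c : V₁ → ℤ) (v₀ : V₁)
    (hQ : QuasiSuperstable G c) (B : Finset V₁) (t : V₁ → ℝ)
    (hInv : BInv G c v₀ B t) (hne : B ≠ Finset.univ) :
    ∃ w x, w ∉ B ∧ BInv G c v₀ (insert w B) (Function.update t w x) := by
  classical
  have hpos := cpos_of_quasi G c hQ
  have hBne : B.Nonempty := ⟨v₀, hInv.mem0⟩
  obtain ⟨nb, hnb⟩ : ∃ nb : V₁ → Finset V₁, nb = fun v => B.filter (fun u => G.Adj u v) :=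
    ⟨_, rfl⟩
  have hnb' : ∀ v, nb v = B.filter (fun u => G.Adj u v) := fun v => by rw [hnb]
  have hnb_mem : ∀ v u, u ∈ nb v ↔ u ∈ B ∧ G.Adj u v := by
    intro v u; rw [hnb' v, Finset.mem_filter]
  obtain ⟨M, hM⟩ : ∃ M : ℝ, M = (B.image t).max' (hBne.image t) := ⟨_, rfl⟩
  have hMub : ∀ u ∈ B, t u ≤ M := fun u hu => by
    rw [hM]; exact Finset.le_max' _ _ (Finset.mem_image_of_mem t hu)
  obtain ⟨wM, hwMB, hwMval⟩ := Finset.mem_image.mp ((B.image t).max'_mem (hBne.image t))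
  rw [← hM] at hwMval
  obtain ⟨aset, haset⟩ : ∃ aset : V₁ → Finset ℝ, aset = fun v => ((nb v).image t).filter
      (fun y => (c v + 1 : ℤ) ≤ (((nb v).filter (fun u => t u ≤ y)).card : ℤ)) := ⟨_, rfl⟩
  have haset_mem : ∀ v y, y ∈ aset v ↔ y ∈ (nb v).image t ∧
      (c v + 1 : ℤ) ≤ (((nb v).filter (fun u => t u ≤ y)).card : ℤ) := by
    intro v y; rw [haset]; exact Finset.mem_filter
  obtain ⟨bset, hbset⟩ : ∃ bset : V₁ → Finset ℝ, bset = fun v => ((nb v).image t).filter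
      (fun y => (c v + 2 : ℤ) ≤ (((nb v).filter (fun u => t u ≤ y)).card : ℤ)) := ⟨_, rfl⟩
  have hbset_mem : ∀ v y, y ∈ bset v ↔ y ∈ (nb v).image t ∧
      (c v + 2 : ℤ) ≤ (((nb v).filter (fun u => t u ≤ y)).card : ℤ) := by
    intro v y; rw [hbset]; exact Finset.mem_filter
  obtain ⟨aval, havalpos, havalneg⟩ : ∃ aval : V₁ → ℝ,
      (∀ v (h1 : (0:ℤ) < c v + 1) (h2 : (aset v).Nonempty), aval v = (aset v).min' h2) ∧
      (∀ v, ¬ (0:ℤ) < c v + 1 → aval v = t v₀ - 2) := by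
    refine ⟨fun v => if h : (0 : ℤ) < c v + 1 ∧ (aset v).Nonempty then (aset v).min' h.2
      else t v₀ - 2, fun v h1 h2 => ?_, fun v h1 => ?_⟩
    · have hc' : (0 : ℤ) < c v + 1 ∧ (aset v).Nonempty := ⟨h1, h2⟩
      simp only [dif_pos hc']
    · have hcond : ¬ ((0 : ℤ) < c v + 1 ∧ (aset v).Nonempty) := by
        rintro ⟨h2, -⟩; exact h1 h2
      simp only [dif_neg hcond]
  obtain ⟨bval, hbvalspec⟩ : ∃ bval : V₁ → ℝ,
      ∀ v (h : (bset v).Nonempty), bval v = (bset v).min' h := by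
    refine ⟨fun v => if h : (bset v).Nonempty then (bset v).min' h else 0, fun v h => ?_⟩
    simp only [dif_pos h]
  have hnbB : ∀ v, nb v ⊆ B := by
    intro v u hu; exact ((hnb_mem v u).mp hu).1
  -- aset nonempty for eligible v with positive threshold
  have haset_ne : ∀ v, (0:ℤ) < c v + 1 → (c v + 1 : ℤ) ≤ ((nb v).card : ℤ) →
      (aset v).Nonempty := by
    intro v h1 h2
    have hnbne : (nb v).Nonempty := by
      rw [← Finset.card_pos]
      have h3 : (0:ℤ) < ((nb v).card:ℤ) := lt_of_lt_of_le h1 h2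
      exact_mod_cast h3
    refine ⟨((nb v).image t).max' (hnbne.image t), ?_⟩
    apply (haset_mem v _).mpr
    refine ⟨Finset.max'_mem _ _, ?_⟩
    have heq : (nb v).filter (fun u => t u ≤ ((nb v).image t).max' (hnbne.image t)) = nb v := by
      apply Finset.filter_eq_self.mpr
      intro u hu
      exact Finset.le_max' _ _ (Finset.mem_image_of_mem t hu)
    rw [heq]; exact h2
  -- aval cut property
  have haval_ge : ∀ v, (c v + 1 : ℤ) ≤ ((nb v).card : ℤ) →
      (c v + 1 : ℤ) ≤ (((nb v).filter (fun u => t u ≤ aval v)).card : ℤ) := by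
    intro v helig
    rcases lt_or_ge (0:ℤ) (c v + 1) with h1 | h1
    · have hne' := haset_ne v h1 helig
      have hmem := Finset.min'_mem (aset v) hne'
      have hprop := ((haset_mem v _).mp hmem).2
      rw [havalpos v h1 hne']
      exact hprop
    · calc (c v + 1 : ℤ) ≤ 0 := h1
        _ ≤ _ := Int.natCast_nonneg _
  -- members of bset exceed M - 1
  have hb_gtM : ∀ v, v ∉ B → ∀ y ∈ bset v, M - 1 < y := by
    intro v hv y hy
    obtain ⟨hyim, hycard⟩ := (hbset_mem v y).mp hy
    by_contra hcon
    push_neg at hcon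
    have hsub : (nb v).filter (fun u => t u ≤ y)
        ⊆ B.filter (fun u => G.Adj u v ∧ t u + 1 ≤ t wM) := by
      intro u hu
      rw [Finset.mem_filter] at hu ⊢
      obtain ⟨hunb, huy⟩ := hu
      obtain ⟨huB, huadj⟩ := (hnb_mem v u).mp hunb
      exact ⟨huB, huadj, by rw [hwMval]; linarith⟩
    have hcard := Finset.card_le_card hsub
    have hstar := hInv.star v hv wM hwMB
    have h1 : (((nb v).filter (fun u => t u ≤ y)).card : ℤ)
        ≤ ((B.filter (fun u => G.Adj u v ∧ t u + 1 ≤ t wM)).card : ℤ) := by exact_mod_cast hcard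
    linarith
  -- bset nonempty implies eligibility
  have hbelig : ∀ v, (bset v).Nonempty → (c v + 1 : ℤ) ≤ ((nb v).card : ℤ) := by
    rintro v ⟨y, hy⟩
    obtain ⟨hyim, hycard⟩ := (hbset_mem v y).mp hy
    have h1 : ((nb v).filter (fun u => t u ≤ y)).card ≤ (nb v).card :=
      Finset.card_le_card (Finset.filter_subset _ _)
    have h2 : (((nb v).filter (fun u => t u ≤ y)).card : ℤ) ≤ ((nb v).card : ℤ) := by
      exact_mod_cast h1
    linarith
  -- aval < bval
  have ha_lt_b : ∀ v, v ∉ B → ∀ (h : (bset v).Nonempty), aval v < bval v := by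
    intro v hv hbne
    rw [hbvalspec v hbne]
    have hbmin := Finset.min'_mem (bset v) hbne
    obtain ⟨hbim, hbcard⟩ := (hbset_mem v _).mp hbmin
    rcases lt_or_ge (0:ℤ) (c v + 1) with h1 | h1
    · -- positive threshold case
      have helig := hbelig v hbne
      have hane := haset_ne v h1 helig
      rw [havalpos v h1 hane]
      obtain ⟨ustar, hustar_nb, hustar_val⟩ := Finset.mem_image.mp hbim
      obtain ⟨T, hT⟩ : ∃ T : Finset V₁,
          T = (nb v).filter (fun u => t u < (bset v).min' hbne) := ⟨_, rfl⟩
      have hsubT : (nb v).filter (fun u => t u ≤ (bset v).min' hbne) ⊆ insert ustar T := by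
        intro u hu
        rw [Finset.mem_filter] at hu
        rcases lt_or_eq_of_le hu.2 with hlt | heq
        · refine Finset.mem_insert_of_mem ?_
          rw [hT, Finset.mem_filter]
          exact ⟨hu.1, hlt⟩
        · have : u = ustar := by
            apply hInv.inj u (hnbB v hu.1) ustar (hnbB v hustar_nb)
            rw [heq, hustar_val]
          rw [this]; exact Finset.mem_insert_self _ _
      have hTcard : (c v + 1 : ℤ) ≤ (T.card : ℤ) := by
        have h2 := Finset.card_le_card hsubT
        have h3 : (insert ustar T).card ≤ T.card + 1 := Finset.card_insert_le _ _
        have h4 : (((nb v).filter (fun u => t u ≤ (bset v).min' hbne)).card : ℤ)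
            ≤ (T.card : ℤ) + 1 := by exact_mod_cast le_trans h2 h3
        linarith
      have hTne : T.Nonempty := by
        rw [← Finset.card_pos]
        have h5 : (0:ℤ) < (T.card : ℤ) := by linarith
        exact_mod_cast h5
      obtain ⟨u', hu'T, hu'val⟩ := Finset.mem_image.mp ((T.image t).max'_mem (hTne.image t))
      have hu'nb : u' ∈ nb v := by
        have := hu'T; rw [hT, Finset.mem_filter] at this; exact this.1
      have hu'lt : t u' < (bset v).min' hbne := by
        have := hu'T; rw [hT, Finset.mem_filter] at this; exact this.2
      have hy'aset : (T.image t).max' (hTne.image t) ∈ aset v := by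
        apply (haset_mem v _).mpr
        constructor
        · rw [← hu'val]; exact Finset.mem_image_of_mem t hu'nb
        · have hTsub2 : T ⊆ (nb v).filter (fun u => t u ≤ (T.image t).max' (hTne.image t)) := by
            intro u hu
            have hunb : u ∈ nb v := by
              have := hu; rw [hT, Finset.mem_filter] at this; exact this.1
            refine Finset.mem_filter.mpr ⟨hunb, ?_⟩
            exact Finset.le_max' _ _ (Finset.mem_image_of_mem t hu)
          have h6 := Finset.card_le_card hTsub2
          have h7 : (T.card : ℤ) ≤ (((nb v).filter
              (fun u => t u ≤ (T.image t).max' (hTne.image t))).card : ℤ) := by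
            exact_mod_cast h6
          linarith
      calc (aset v).min' hane ≤ (T.image t).max' (hTne.image t) :=
            Finset.min'_le _ _ hy'aset
        _ = t u' := hu'val.symm
        _ < _ := hu'lt
    · -- threshold zero case
      rw [havalneg v (not_lt.mpr h1)]
      obtain ⟨ustar, hustar_nb, hustar_val⟩ := Finset.mem_image.mp hbim
      have h8 : t v₀ ≤ (bset v).min' hbne := by
        rw [← hustar_val]
        exact hInv.tmin ustar (hnbB v hustar_nb)
      linarith
  -- choose the eligible vertex with minimal aval
  obtain ⟨E, hE⟩ : ∃ E : Finset V₁, E = Finset.univ.filter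
      (fun w => w ∉ B ∧ (c w + 1 : ℤ) ≤ ((nb w).card : ℤ)) := ⟨_, rfl⟩
  have hE_mem : ∀ w, w ∈ E ↔ w ∉ B ∧ (c w + 1 : ℤ) ≤ ((nb w).card : ℤ) := by
    intro w
    rw [hE, Finset.mem_filter]
    simp
  have hEne : E.Nonempty := by
    obtain ⟨w, hw1, hw2⟩ := exists_eligible G c hQ B hne
    refine ⟨w, (hE_mem w).mpr ⟨hw1, ?_⟩⟩
    rw [hnb' w]
    exact hw2
  obtain ⟨w, hwE, hwmin⟩ := Finset.exists_min_image E aval hEne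
  obtain ⟨hwB, hwelig⟩ := (hE_mem w).mp hwE
  -- the upper bounds
  obtain ⟨UB, hUB⟩ : ∃ UB : Finset ℝ, UB = (Finset.univ.filter
      (fun v => v ∉ B ∧ (bset v).Nonempty)).image (fun v => bval v + 1) := ⟨_, rfl⟩
  obtain ⟨L, hL⟩ : ∃ L : ℝ, L = max M (aval w + 1) := ⟨_, rfl⟩
  have hLUB : ∀ y ∈ UB, L < y := by
    intro y hy
    rw [hUB] at hy
    obtain ⟨v, hvmem, rfl⟩ := Finset.mem_image.mp hy
    have hvmem' : v ∉ B ∧ (bset v).Nonempty := by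
      have := Finset.mem_filter.mp hvmem
      exact this.2
    obtain ⟨hvB, hvbne⟩ := hvmem'
    rw [hL]
    apply max_lt
    · have h9 := hb_gtM v hvB _ (Finset.min'_mem (bset v) hvbne)
      rw [hbvalspec v hvbne]
      linarith
    · have h1 : aval w ≤ aval v := by
        apply hwmin
        exact (hE_mem v).mpr ⟨hvB, hbelig v hvbne⟩
      have h2 := ha_lt_b v hvB hvbne
      linarith
  -- choose x
  obtain ⟨x, hx⟩ : ∃ x : ℝ, x = if h : UB.Nonempty then (L + UB.min' h)/2 else L + 1 := ⟨_, rfl⟩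
  have hxL : L < x := by
    rw [hx]
    split_ifs with h
    · have := hLUB _ (Finset.min'_mem UB h)
      linarith
    · linarith
  have hxUB : ∀ y ∈ UB, x < y := by
    intro y hy
    rw [hx]
    split_ifs with h
    · have h1 := hLUB _ (Finset.min'_mem UB h)
      have h2 := Finset.min'_le UB y hy
      linarith
    · exact absurd ⟨y, hy⟩ h
  have hxgtB : ∀ u ∈ B, t u < x := by
    intro u hu
    have h1 : t u ≤ M := hMub u hu
    have h2 : M ≤ L := by rw [hL]; exact le_max_left _ _
    linarith
  have hxgta : aval w + 1 < x := by
    have : aval w + 1 ≤ L := by rw [hL]; exact le_max_right _ _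
    linarith
  -- the key upper bound on counts at x
  have hstarx : ∀ v, v ∉ B →
      ((B.filter (fun u => G.Adj u v ∧ t u + 1 ≤ x)).card : ℤ) ≤ c v + 1 := by
    intro v hv
    by_contra hcon
    push_neg at hcon
    obtain ⟨S, hS⟩ : ∃ S : Finset V₁, S = B.filter (fun u => G.Adj u v ∧ t u + 1 ≤ x) :=
      ⟨_, rfl⟩
    have hScard : (c v + 2 : ℤ) ≤ (S.card : ℤ) := by rw [hS]; linarith
    have hSne : S.Nonempty := by
      rw [← Finset.card_pos]
      have h0 : (0:ℤ) < (S.card : ℤ) := by have := hpos v; linarith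
      exact_mod_cast h0
    obtain ⟨us, husS, husval⟩ := Finset.mem_image.mp ((S.image t).max'_mem (hSne.image t))
    have husS' : us ∈ B ∧ G.Adj us v ∧ t us + 1 ≤ x := by
      have := husS; rw [hS, Finset.mem_filter] at this; exact this
    have hys_bset : (S.image t).max' (hSne.image t) ∈ bset v := by
      apply (hbset_mem v _).mpr
      constructor
      · rw [← husval]
        exact Finset.mem_image_of_mem t ((hnb_mem v us).mpr ⟨husS'.1, husS'.2.1⟩)
      · have hsub : S ⊆ (nb v).filter (fun u => t u ≤ (S.image t).max' (hSne.image t)) := by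
          intro u hu
          have hu' : u ∈ B ∧ G.Adj u v ∧ t u + 1 ≤ x := by
            have := hu; rw [hS, Finset.mem_filter] at this; exact this
          refine Finset.mem_filter.mpr ⟨(hnb_mem v u).mpr ⟨hu'.1, hu'.2.1⟩, ?_⟩
          exact Finset.le_max' _ _ (Finset.mem_image_of_mem t hu)
        have h1 := Finset.card_le_card hsub
        have h2 : (S.card : ℤ) ≤ (((nb v).filter
            (fun u => t u ≤ (S.image t).max' (hSne.image t))).card : ℤ) := by
          exact_mod_cast h1
        linarith
    have hbsetne : (bset v).Nonempty := ⟨_, hys_bset⟩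
    have hUBmem : bval v + 1 ∈ UB := by
      rw [hUB]
      apply Finset.mem_image_of_mem
      apply Finset.mem_filter.mpr
      exact ⟨Finset.mem_univ _, hv, hbsetne⟩
    have h1 : x < bval v + 1 := hxUB _ hUBmem
    have h2 : bval v ≤ (S.image t).max' (hSne.image t) := by
      rw [hbvalspec v hbsetne]
      exact Finset.min'_le _ _ hys_bset
    have h3 : (S.image t).max' (hSne.image t) + 1 ≤ x := by
      rw [← husval]
      linarith [husS'.2.2]
    linarith
  -- exact count at w
  have hcountw : ((B.filter (fun u => G.Adj u w ∧ t u + 1 < x)).card : ℤ) = c w + 1 := by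
    have hle : ((B.filter (fun u => G.Adj u w ∧ t u + 1 < x)).card : ℤ) ≤ c w + 1 := by
      have hsub : B.filter (fun u => G.Adj u w ∧ t u + 1 < x)
          ⊆ B.filter (fun u => G.Adj u w ∧ t u + 1 ≤ x) := by
        intro u hu
        obtain ⟨h1, h2, h3⟩ := Finset.mem_filter.mp hu
        exact Finset.mem_filter.mpr ⟨h1, h2, le_of_lt h3⟩
      have h1 := Finset.card_le_card hsub
      have h2 : ((B.filter (fun u => G.Adj u w ∧ t u + 1 < x)).card : ℤ)
          ≤ ((B.filter (fun u => G.Adj u w ∧ t u + 1 ≤ x)).card : ℤ) := by exact_mod_cast h1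
      linarith [hstarx w hwB]
    have hge : (c w + 1 : ℤ) ≤ ((B.filter (fun u => G.Adj u w ∧ t u + 1 < x)).card : ℤ) := by
      have hsub : (nb w).filter (fun u => t u ≤ aval w)
          ⊆ B.filter (fun u => G.Adj u w ∧ t u + 1 < x) := by
        intro u hu
        obtain ⟨hunb, huval⟩ := Finset.mem_filter.mp hu
        obtain ⟨huB, huadj⟩ := (hnb_mem w u).mp hunb
        exact Finset.mem_filter.mpr ⟨huB, huadj, by linarith⟩
      have h1 := Finset.card_le_card hsub
      have h2 : (((nb w).filter (fun u => t u ≤ aval w)).card : ℤ)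
          ≤ ((B.filter (fun u => G.Adj u w ∧ t u + 1 < x)).card : ℤ) := by exact_mod_cast h1
      linarith [haval_ge w hwelig]
    omega
  -- assemble
  refine ⟨w, x, hwB, ?_⟩
  have ht'B : ∀ u ∈ B, Function.update t w x u = t u := by
    intro u hu
    apply Function.update_of_ne
    rintro rfl
    exact hwB hu
  have ht'w : Function.update t w x w = x := Function.update_self _ _ _
  constructor
  · exact Finset.mem_insert_of_mem hInv.mem0
  · -- inj
    intro u hu v hv heq
    rcases Finset.mem_insert.mp hu with rfl | huB <;>
      rcases Finset.mem_insert.mp hv with h' | hvB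
    · rw [h']
    · rw [ht'w, ht'B v hvB] at heq
      have := hxgtB v hvB
      linarith
    · rw [h', ht'w, ht'B u huB] at heq
      have := hxgtB u huB
      linarith
    · rw [ht'B u huB, ht'B v hvB] at heq
      exact hInv.inj u huB v hvB heq
  · -- tmin
    intro v hv
    rw [ht'B v₀ hInv.mem0]
    rcases Finset.mem_insert.mp hv with h' | hvB
    · rw [h', ht'w]
      have h1 : t v₀ ≤ M := hMub v₀ hInv.mem0
      have h2 : M ≤ L := by rw [hL]; exact le_max_left _ _
      linarith
    · rw [ht'B v hvB]
      exact hInv.tmin v hvB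
  · -- count
    intro v hv
    rcases Finset.mem_insert.mp hv with h' | hvB
    · rw [h']
      have hcond : ¬ (G.Adj w w ∧ Function.update t w x w + 1 < Function.update t w x w) := by
        rintro ⟨hadj, -⟩
        exact G.irrefl hadj
      rw [Finset.filter_insert, if_neg hcond]
      have heq2 : B.filter (fun u => G.Adj u w ∧ Function.update t w x u + 1
          < Function.update t w x w)
          = B.filter (fun u => G.Adj u w ∧ t u + 1 < x) := by
        apply Finset.filter_congr
        intro u hu
        rw [ht'B u hu, ht'w]
      rw [heq2]
      exact hcountw
    · have hcond : ¬ (G.Adj w v ∧ Function.update t w x w + 1 < Function.update t w x v) := by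
        rintro ⟨-, hlt⟩
        rw [ht'w, ht'B v hvB] at hlt
        have := hxgtB v hvB
        linarith
      rw [Finset.filter_insert, if_neg hcond]
      have heq2 : B.filter (fun u => G.Adj u v ∧ Function.update t w x u + 1
          < Function.update t w x v)
          = B.filter (fun u => G.Adj u v ∧ t u + 1 < t v) := by
        apply Finset.filter_congr
        intro u hu
        rw [ht'B u hu, ht'B v hvB]
      rw [heq2]
      exact hInv.count v hvB
  · -- star
    intro v hv z hz
    have hvB : v ∉ B := fun h => hv (Finset.mem_insert_of_mem h)
    rcases Finset.mem_insert.mp hz with h' | hzB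
    · rw [h']
      have hcond : ¬ (G.Adj w v ∧ Function.update t w x w + 1 ≤ Function.update t w x w) := by
        rintro ⟨-, hlt⟩
        rw [ht'w] at hlt
        linarith
      rw [Finset.filter_insert, if_neg hcond]
      have heq2 : B.filter (fun u => G.Adj u v ∧ Function.update t w x u + 1
          ≤ Function.update t w x w)
          = B.filter (fun u => G.Adj u v ∧ t u + 1 ≤ x) := by
        apply Finset.filter_congr
        intro u hu
        rw [ht'B u hu, ht'w]
      rw [heq2]
      exact hstarx v hvB
    · have hcond : ¬ (G.Adj w v ∧ Function.update t w x w + 1 ≤ Function.update t w x z) := by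
        rintro ⟨-, hlt⟩
        rw [ht'w, ht'B z hzB] at hlt
        have := hxgtB z hzB
        linarith
      rw [Finset.filter_insert, if_neg hcond]
      have heq2 : B.filter (fun u => G.Adj u v ∧ Function.update t w x u + 1
          ≤ Function.update t w x z)
          = B.filter (fun u => G.Adj u v ∧ t u + 1 ≤ t z) := by
        apply Finset.filter_congr
        intro u hu
        rw [ht'B u hu, ht'B z hzB]
      rw [heq2]
      exact hInv.star v hvB z hzB

lemma exists_inv_univ (G : SimpleGraph V₁) [DecidableRel G.Adj] (c : V₁ → ℤ) (v₀ : V₁)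
    (hQ : QuasiSuperstable G c) (h0 : c v₀ = -1) :
    ∃ t : V₁ → ℝ, BInv G c v₀ Finset.univ t := by
  classical
  have hpos := cpos_of_quasi G c hQ
  have hbase : BInv G c v₀ {v₀} (fun _ => 0) := by
    constructor
    · exact Finset.mem_singleton_self v₀
    · intro u hu v hv _
      rw [Finset.mem_singleton] at hu hv
      rw [hu, hv]
    · intro v _; exact le_refl 0
    · intro v hv
      rw [Finset.mem_singleton] at hv
      subst hv
      have : ({v} : Finset V₁).filter (fun u => G.Adj u v ∧ (0:ℝ) + 1 < 0) = ∅ := by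
        apply Finset.filter_eq_empty_iff.mpr
        intro u _
        rintro ⟨-, hlt⟩
        linarith
      rw [this]
      simp [h0]
    · intro v _ w hw
      rw [Finset.mem_singleton] at hw
      subst hw
      have : ({w} : Finset V₁).filter (fun u => G.Adj u v ∧ (0:ℝ) + 1 ≤ 0) = ∅ := by
        apply Finset.filter_eq_empty_iff.mpr
        intro u _
        rintro ⟨-, hlt⟩
        linarith
      rw [this]
      simpa using hpos v
  have H : ∀ k (B : Finset V₁) (t : V₁ → ℝ), BInv G c v₀ B t →
      (Finset.univ : Finset V₁).card - B.card ≤ k → ∃ t', BInv G c v₀ Finset.univ t' := by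
    intro k
    induction k with
    | zero =>
      intro B t hI hc
      have hle : (Finset.univ : Finset V₁).card ≤ B.card := by omega
      have : B = Finset.univ :=
        Finset.eq_univ_of_card B (le_antisymm (Finset.card_le_univ B) hle)
      exact ⟨t, this ▸ hI⟩
    | succ k ih =>
      intro B t hI hc
      by_cases hBu : B = Finset.univ
      · exact ⟨t, hBu ▸ hI⟩
      · obtain ⟨w, x, hw, hI'⟩ := exists_extend G c v₀ hQ B t hI hBu
        apply ih _ _ hI'
        have h1 : (insert w B).card = B.card + 1 := Finset.card_insert_of_notMem hw
        have h2 : B.card < (Finset.univ : Finset V₁).card :=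
          Finset.card_lt_card (Finset.ssubset_univ_iff.mpr hBu)
        omega
  exact H (Finset.univ : Finset V₁).card {v₀} (fun _ => 0) hbase (by omega)

lemma dir2_main (G : SimpleGraph V₁) [DecidableRel G.Adj] (c : V₁ → ℤ) (v₀ : V₁)
    (hQ : QuasiSuperstable G c) (h0 : c v₀ = -1)
    (hnb : ∀ v, G.Adj v v₀ → 0 ≤ c v) :
    ∃ O : V₁ → V₁ → Prop, IsSemiorientation G O ∧ (∀ v, G.Adj v₀ v → O v₀ v) ∧
      (fun v => (indeg O v : ℤ) - 1) = c := by
  classical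
  obtain ⟨t, hI⟩ := exists_inv_univ G c v₀ hQ h0
  refine ⟨fun u v => G.Adj u v ∧ t u + 1 < t v, isSemiorientation_of_t G t, ?_, ?_⟩
  · intro v hadj
    have h1 : (0:ℤ) < c v + 1 := by
      have := hnb v hadj.symm
      linarith
    have hcnt := hI.count v (Finset.mem_univ v)
    have hne : (Finset.univ.filter (fun u => G.Adj u v ∧ t u + 1 < t v)).Nonempty := by
      rw [← Finset.card_pos]
      have : (0:ℤ) < ((Finset.univ.filter (fun u => G.Adj u v ∧ t u + 1 < t v)).card : ℤ) := by
        rw [hcnt]; exact h1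
      exact_mod_cast this
    obtain ⟨u, hu⟩ := hne
    obtain ⟨-, huadj, hult⟩ := Finset.mem_filter.mp hu
    have h2 : t v₀ ≤ t u := hI.tmin u (Finset.mem_univ u)
    exact ⟨hadj, by linarith⟩
  · funext v
    have hcnt := hI.count v (Finset.mem_univ v)
    have hind : (indeg (fun u v => G.Adj u v ∧ t u + 1 < t v) v : ℤ)
        = ((Finset.univ.filter (fun u => G.Adj u v ∧ t u + 1 < t v)).card : ℤ) := by
      rw [indeg, ncard_filter_eq]
    show (indeg (fun u v => G.Adj u v ∧ t u + 1 < t v) v : ℤ) - 1 = c v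
    rw [hind, hcnt]
    ring

end Construction

/-- Fix `v₀ ∈ V`.  The set of divisors `v ↦ indeg_O v - 1`, as `O` ranges over the
`G`-semiorientations in which `v₀` is a source, equals the set of quasi-superstable
divisors `c` with `c v₀ = -1` and `c v ≥ 0` for every vertex `v` adjacent to `v₀`. -/
theorem stmt15 {V : Type*} [Fintype V] (G : SimpleGraph V) (hconn : G.Connected)
    (v₀ : V) :
    {c : V → ℤ | ∃ O : V → V → Prop, IsSemiorientation G O ∧
        (∀ v, G.Adj v₀ v → O v₀ v) ∧ c = fun v => (indeg O v : ℤ) - 1} =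
    {c : V → ℤ | QuasiSuperstable G c ∧ c v₀ = -1 ∧
        ∀ v, G.Adj v v₀ → 0 ≤ c v} := by
  letI : DecidableEq V := Classical.decEq V
  letI : DecidableRel G.Adj := fun a b => Classical.dec _
  ext c
  simp only [Set.mem_setOf_eq]
  constructor
  · rintro ⟨O, hO, hsrc, rfl⟩
    obtain ⟨h1, h2, h3⟩ := dir1_main G v₀ O hO hsrc
    exact ⟨h1, h2, h3⟩
  · rintro ⟨hQ, h0, hnb⟩
    obtain ⟨O, h1, h2, h3⟩ := dir2_main G c v₀ hQ h0 hnb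
    exact ⟨O, h1, h2, h3.symm⟩


end Soap
end

section
/- Fix a vertex v₀ of G. The map ρ₀ sending each G-semiorientation O in which v₀ is a source (every edge incident to v₀ oriented away from v₀) to the set {x ∈ ℝ^{V∖{v₀}} : x(v) - x(u) > 1 for every (u,v) ∈ O with u ≠ v₀ and v ≠ v₀, and |x(u) - x(v)| < 1 for every blank edge {u,v} of O with u ≠ v₀ and v ≠ v₀} is a bijection from the set of such G-semiorientations onto the set of regions of the (G,v₀)-semiorder arrangement. -/
namespace Soap

variable {V : Type*} {W : Type*}

noncomputable def wlist {α : Type*} (w : α → α → ℝ) : List α → ℝ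
  | [] => 0
  | [_] => 0
  | a :: b :: t => w a b + wlist w (b :: t)

lemma wlist_split {α : Type*} (w : α → α → ℝ) (a : α) : ∀ (s t : List α),
    wlist w (s ++ a :: t) = wlist w (s ++ [a]) + wlist w (a :: t)
  | [], t => by cases t <;> simp [wlist]
  | [b], t => by cases t <;> simp [wlist] <;> ring
  | b :: c :: s, t => by
    have h1 := wlist_split w a (c :: s) t
    simp only [List.cons_append, wlist, List.append_eq] at h1 ⊢
    rw [h1]; ring

lemma wlist_concat {α : Type*} (w : α → α → ℝ) (b : α) : ∀ (l : List α) (h : l ≠ []),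
    wlist w (l ++ [b]) = wlist w l + w (l.getLast h) b
  | [], h => absurd rfl h
  | [a], _ => by simp [wlist]
  | a :: c :: t, _ => by
    have h1 := wlist_concat w b (c :: t) (by simp)
    simp only [List.cons_append, wlist, List.append_eq] at h1 ⊢
    rw [h1]
    have h2 : (a :: c :: t).getLast (by simp) = (c :: t).getLast (by simp) := by
      simp [List.getLast_cons]
    rw [h2]; ring

lemma wlist_eq_sum {α : Type*} (w : α → α → ℝ) (d : α) : ∀ (l : List α),
    wlist w l = ∑ k ∈ Finset.range (l.length - 1), w (l.getD k d) (l.getD (k + 1) d)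
  | [] => by simp [wlist]
  | [a] => by simp [wlist]
  | a :: b :: t => by
    have h1 := wlist_eq_sum w d (b :: t)
    simp only [wlist, List.length_cons] at h1 ⊢
    rw [h1]
    have h2 : (t.length + 1 + 1) - 1 = (t.length + 1 - 1) + 1 := by omega
    rw [h2, Finset.sum_range_succ']
    simp [List.getD_cons_succ]
    ring

def ArcR (G : SimpleGraph V) (O : V → V → Prop) (v₀ : V) :
    {v : V // v ≠ v₀} → {v : V // v ≠ v₀} → Prop :=
  fun u v => O u.1 v.1 ∨ IsBlank G O u.1 v.1

open Classical in
noncomputable def wgt (O : V → V → Prop) (v₀ : V) (ε : ℝ) :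
    {v : V // v ≠ v₀} → {v : V // v ≠ v₀} → ℝ :=
  fun u v => if O u.1 v.1 then 1 + ε else -1 + ε

lemma arc_adj {G : SimpleGraph V} {O : V → V → Prop} (hO : IsPartialOrientation G O)
    {v₀ : V} {u v : {v : V // v ≠ v₀}} (h : ArcR G O v₀ u v) : G.Adj u.1 v.1 := by
  rcases h with h | h
  · exact (hO _ _ h).1
  · exact h.1

lemma arc_not_rev {G : SimpleGraph V} {O : V → V → Prop} (hO : IsPartialOrientation G O)
    {v₀ : V} {u v : {v : V // v ≠ v₀}} (h : ArcR G O v₀ u v) : ¬ O v.1 u.1 := by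
  rcases h with h | h
  · exact (hO _ _ h).2
  · exact h.2.2

lemma arc_ne {G : SimpleGraph V} {O : V → V → Prop} (hO : IsPartialOrientation G O)
    {v₀ : V} {u v : {v : V // v ≠ v₀}} (h : ArcR G O v₀ u v) : u ≠ v :=
  fun he => (arc_adj hO h).ne (by rw [he])

lemma cyc_neg [Fintype V] {G : SimpleGraph V} {O : V → V → Prop}
    (hO : IsSemiorientation G O) (v₀ : V) {ε : ℝ} (hε : 0 < ε)
    (hεc : ε * (Fintype.card V) ≤ 1/2)
    (m : List {v : V // v ≠ v₀}) (hne : m ≠ []) (hnd : m.Nodup)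
    (hch : m.Chain' (ArcR G O v₀))
    (hcl : ArcR G O v₀ (m.getLast hne) (m.head hne)) :
    wlist (wgt O v₀ ε) m + wgt O v₀ ε (m.getLast hne) (m.head hne) < 0 := by
  classical
  haveI : Fintype {v : V // v ≠ v₀} := Fintype.ofFinite _
  have hcardle : Fintype.card {v : V // v ≠ v₀} ≤ Fintype.card V :=
    Fintype.card_le_of_injective Subtype.val Subtype.val_injective
  have hcard1 : (1 : ℕ) ≤ Fintype.card V := Fintype.card_pos_iff.2 ⟨v₀⟩
  have hcard1' : (1 : ℝ) ≤ (Fintype.card V : ℝ) := by exact_mod_cast hcard1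
  have hεhalf : ε ≤ 1/2 := by nlinarith
  set n := m.length with hn
  have hn1 : 1 ≤ n := by rw [hn]; exact List.length_pos_iff.2 hne
  have hnN : n ≤ Fintype.card V := le_trans (hnd.length_le_card) hcardle
  have hn2 : 2 ≤ n := by
    by_contra h
    have : n = 1 := by omega
    obtain ⟨a, ha⟩ := List.length_eq_one_iff.1 this
    subst ha
    exact arc_ne hO.1 hcl (by simp)
  rcases eq_or_lt_of_le hn2 with h2 | h3
  · -- length-2 case
    obtain ⟨a, b, hab⟩ := List.length_eq_two.1 h2.symm
    subst hab
    have hgl : [a, b].getLast hne = b := rfl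
    have hhd : [a, b].head hne = a := rfl
    rw [hgl, hhd] at hcl
    have hab' : ArcR G O v₀ a b := (List.isChain_cons_cons.1 hch).1
    have hnab : ¬ O a.1 b.1 := by
      rcases hcl with h | h
      · exact fun ho => (hO.1 _ _ ho).2 h
      · exact h.2.2
    have hnba : ¬ O b.1 a.1 := arc_not_rev hO.1 hab'
    rw [hgl, hhd]
    simp only [wlist, wgt, if_neg hnab, if_neg hnba]
    linarith
  · -- length ≥ 3 case
    have hn3 : 3 ≤ n := h3
    haveI : NeZero n := ⟨by omega⟩
    set d := m.head hne with hd
    set c' : ZMod n → {v : V // v ≠ v₀} := fun i => m.getD i.val d with hc'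
    set c : ZMod n → V := fun i => (c' i).1 with hc
    have hlen : ∀ i : ZMod n, i.val < m.length := fun i => by
      rw [← hn]; exact ZMod.val_lt i
    have hget : ∀ i : ZMod n, c' i = m[i.val]'(hlen i) :=
      fun i => List.getD_eq_getElem m d (hlen i)
    have hval1 : (1 : ZMod n).val = 1 := by
      haveI : Fact (1 < n) := ⟨by omega⟩
      exact ZMod.val_one n
    have hvaladd : ∀ i : ZMod n, (i + 1).val = (i.val + 1) % n := by
      intro i; rw [ZMod.val_add, hval1]
    have harc : ∀ i : ZMod n, ArcR G O v₀ (c' i) (c' (i + 1)) := by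
      intro i
      have hiv : i.val < n := ZMod.val_lt i
      rcases Nat.lt_or_ge (i.val + 1) n with hmid | hge
      · have hsucc : (i + 1).val = i.val + 1 := by
          rw [hvaladd i]; exact Nat.mod_eq_of_lt hmid
        have hch' := List.isChain_iff_getElem.1 hch i.val (by omega)
        rw [hget i, hget (i + 1)]
        have he : m[(i + 1).val]'(hlen (i + 1)) = m[i.val + 1]'(by omega) := by
          simp only [hsucc]
        rw [he]
        exact hch'
      · -- wrap around
        have hlast : i.val = m.length - 1 := by omega
        have h0 : (i + 1).val = 0 := by
          rw [hvaladd i]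
          have : i.val + 1 = n := by omega
          rw [this]; exact Nat.mod_self n
        have hgl : c' i = m.getLast hne := by
          rw [hget i, List.getLast_eq_getElem hne]
          simp only [hlast]
        have hhd : c' (i + 1) = m.head hne := by
          rw [hget (i + 1), List.head_eq_getElem hne]
          simp only [h0]
        rw [hgl, hhd]; exact hcl
    have hinj : Function.Injective c := by
      intro i j hij
      have h1 : c' i = c' j := Subtype.val_injective hij
      rw [hget i, hget j] at h1
      have h2 := (hnd.getElem_inj_iff).1 h1
      exact ZMod.val_injective n h2
    have hadj : ∀ i, G.Adj (c i) (c (i + 1)) := fun i => arc_adj hO.1 (harc i)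
    have hnorev : ∀ i, ¬ O (c (i + 1)) (c i) := fun i => arc_not_rev hO.1 (harc i)
    have hlt := hO.2 n c hn3 hinj hadj hnorev
    set s : Finset (ZMod n) := Finset.univ.filter (fun i => O (c i) (c (i + 1))) with hs
    have h1 : {i : ZMod n | O (c i) (c (i + 1))}.ncard = s.card := by
      rw [← Set.ncard_coe_finset]; congr 1; ext i; simp [hs]
    have h2 : {i : ZMod n | IsBlank G O (c i) (c (i + 1))}.ncard = sᶜ.card := by
      rw [← Set.ncard_coe_finset]; congr 1; ext i
      simp only [Finset.coe_compl, Set.mem_compl_iff, Finset.mem_coe, Finset.mem_filter,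
        Finset.mem_univ, true_and, Set.mem_setOf_eq, hs]
      constructor
      · intro hb; exact hb.2.1
      · intro hno
        rcases harc i with h | h
        · exact absurd h hno
        · exact h
    rw [h1, h2, Finset.card_compl, ZMod.card] at hlt
    set o := s.card with ho
    have hocard : o ≤ n := by
      rw [ho]
      calc s.card ≤ Finset.univ.card := Finset.card_le_univ s
      _ = n := by rw [Finset.card_univ, ZMod.card]
    have hob : 2 * o + 1 ≤ n := by omega
    have hsum1 : wlist (wgt O v₀ ε) m + wgt O v₀ ε (m.getLast hne) (m.head hne)
        = ∑ k ∈ Finset.range n, wgt O v₀ ε (m.getD k d) (m.getD ((k + 1) % n) d) := by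
      have hr : n = (n - 1) + 1 := by omega
      rw [hr, Finset.sum_range_succ, ← hr]
      have e1 : ∑ k ∈ Finset.range (n - 1), wgt O v₀ ε (m.getD k d) (m.getD ((k + 1) % n) d)
          = wlist (wgt O v₀ ε) m := by
        rw [wlist_eq_sum (wgt O v₀ ε) d m, ← hn]
        apply Finset.sum_congr rfl
        intro k hk
        rw [Finset.mem_range] at hk
        congr 2
        exact Nat.mod_eq_of_lt (by omega)
      have e2 : wgt O v₀ ε (m.getLast hne) (m.head hne)
          = wgt O v₀ ε (m.getD (n - 1) d) (m.getD ((n - 1 + 1) % n) d) := by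
        rw [Nat.sub_add_cancel hn1, Nat.mod_self,
            List.getD_eq_getElem m d (show n - 1 < m.length by omega),
            List.getD_eq_getElem m d (show 0 < m.length by omega),
            List.getLast_eq_getElem hne, List.head_eq_getElem hne]
      rw [e1, e2, Nat.sub_add_cancel hn1]
    have hsum2 : ∑ k ∈ Finset.range n, wgt O v₀ ε (m.getD k d) (m.getD ((k + 1) % n) d)
        = ∑ i : ZMod n, wgt O v₀ ε (c' i) (c' (i + 1)) := by
      refine Finset.sum_bij' (fun (k : ℕ) (_ : k ∈ Finset.range n) => ((k : ZMod n)))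
        (fun (i : ZMod n) (_ : i ∈ Finset.univ) => i.val) ?_ ?_ ?_ ?_ ?_
      · intro a ha; exact Finset.mem_univ _
      · intro a ha; rw [Finset.mem_range]; exact ZMod.val_lt a
      · intro a ha; rw [Finset.mem_range] at ha
        show ((a : ZMod n)).val = a
        rw [ZMod.val_natCast, Nat.mod_eq_of_lt ha]
      · intro a ha
        show ((ZMod.val a : ℕ) : ZMod n) = a
        exact ZMod.natCast_rightInverse a
      · intro a ha
        rw [Finset.mem_range] at ha
        have e1 : c' ((a : ZMod n)) = m.getD a d := by
          show m.getD ((a : ZMod n)).val d = m.getD a d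
          rw [ZMod.val_natCast, Nat.mod_eq_of_lt ha]
        have e2 : c' ((a : ZMod n) + 1) = m.getD ((a + 1) % n) d := by
          show m.getD ((a : ZMod n) + 1).val d = m.getD ((a + 1) % n) d
          rw [hvaladd, ZMod.val_natCast, Nat.mod_add_mod]
        rw [e1, e2]
    have hsum3 : ∑ i : ZMod n, wgt O v₀ ε (c' i) (c' (i + 1))
        = (o : ℝ) * (1 + ε) + ((n : ℝ) - o) * (-1 + ε) := by
      rw [← Finset.sum_filter_add_sum_filter_not Finset.univ
        (fun i => O (c i) (c (i + 1))) (fun i => wgt O v₀ ε (c' i) (c' (i + 1)))]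
      have e1 : ∀ i ∈ Finset.univ.filter (fun i => O (c i) (c (i + 1))),
          wgt O v₀ ε (c' i) (c' (i + 1)) = 1 + ε := by
        intro i hi
        rw [Finset.mem_filter] at hi
        exact if_pos hi.2
      have e2 : ∀ i ∈ Finset.univ.filter (fun i => ¬ O (c i) (c (i + 1))),
          wgt O v₀ ε (c' i) (c' (i + 1)) = -1 + ε := by
        intro i hi
        rw [Finset.mem_filter] at hi
        exact if_neg hi.2
      rw [Finset.sum_congr rfl e1, Finset.sum_congr rfl e2,
        Finset.sum_const, Finset.sum_const]
      have e3 : Finset.univ.filter (fun i : ZMod n => ¬ O (c i) (c (i + 1))) = sᶜ := by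
        rw [hs]; ext i; simp
      rw [e3, ← hs, ← ho, Finset.card_compl, ZMod.card, ← ho]
      have e4 : ((n - o : ℕ) : ℝ) = (n : ℝ) - o := by
        push_cast [Nat.cast_sub hocard]; ring
      rw [nsmul_eq_mul, nsmul_eq_mul, e4]
    rw [hsum1, hsum2, hsum3]
    have h4 : (n : ℝ) * ε ≤ (Fintype.card V : ℝ) * ε :=
      mul_le_mul_of_nonneg_right (by exact_mod_cast hnN) hε.le
    have h5 : (Fintype.card V : ℝ) * ε ≤ 1/2 := by linarith [hεc]
    have h6 : (2 * o : ℝ) - n ≤ -1 := by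
      have : ((2 * o + 1 : ℕ) : ℝ) ≤ (n : ℝ) := by exact_mod_cast hob
      push_cast at this
      linarith
    nlinarith

lemma exists_mem_rho0 [Fintype V] {G : SimpleGraph V} {O : V → V → Prop}
    (hO : IsSemiorientation G O) (v₀ : V) : (rho0 G v₀ O).Nonempty := by
  classical
  haveI : Fintype {v : V // v ≠ v₀} := Fintype.ofFinite _
  have hN1 : 1 ≤ Fintype.card V := Fintype.card_pos_iff.2 ⟨v₀⟩
  have hN0 : (0 : ℝ) < (Fintype.card V : ℝ) := by exact_mod_cast hN1
  set ε : ℝ := 1 / (2 * Fintype.card V) with hεdef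
  have hε : 0 < ε := by positivity
  have hεc : ε * (Fintype.card V) ≤ 1/2 := by
    rw [hεdef]
    rw [div_mul_eq_mul_div, one_mul, div_le_iff₀ (by positivity)]
    ring_nf
    nlinarith
  set A := ArcR G O v₀ with hA
  set w := wgt O v₀ ε with hw
  set P : {v : V // v ≠ v₀} → Set (List {v : V // v ≠ v₀}) := fun v =>
    {l | l ≠ [] ∧ l.Nodup ∧ l.Chain' A ∧ l.getLast? = some v} with hP
  set S : {v : V // v ≠ v₀} → Set ℝ := fun v => wlist w '' P v with hS
  have hfin : ∀ v, (S v).Finite := by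
    intro v
    apply Set.Finite.image
    apply Set.Finite.subset (List.finite_length_le _ (Fintype.card {v : V // v ≠ v₀}))
    intro l hl
    exact hl.2.1.length_le_card
  have hmem0 : ∀ v, (0 : ℝ) ∈ S v := by
    intro v
    exact ⟨[v], ⟨by simp, by simp, List.isChain_singleton _, by simp⟩, rfl⟩
  set x : {v : V // v ≠ v₀} → ℝ := fun v => sSup (S v) with hx
  have hxmem : ∀ v, x v ∈ S v := fun v => Set.Nonempty.csSup_mem ⟨0, hmem0 v⟩ (hfin v)
  have hub : ∀ v r, r ∈ S v → r ≤ x v := fun v r hr => le_csSup (hfin v).bddAbove hr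
  have key : ∀ u v, A u v → x u + w u v ≤ x v := by
    intro u v hAuv
    obtain ⟨l, hl, hwl⟩ := hxmem u
    obtain ⟨hlne, hlnd, hlch, hllast⟩ := hl
    have hlast : l.getLast hlne = u := by
      rw [l.getLast?_eq_getLast hlne] at hllast
      exact Option.some_injective _ hllast
    by_cases hv : v ∈ l
    · obtain ⟨s1, t1, hst⟩ := List.append_of_mem hv
      have hpre : (s1 ++ [v]) ∈ P v := by
        refine ⟨by simp, ?_, ?_, List.getLast?_concat⟩
        · apply List.Nodup.sublist _ hlnd
          rw [hst]
          exact List.Sublist.append_left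
            (List.cons_sublist_cons.2 (List.nil_sublist t1)) s1
        · exact hlch.prefix ⟨t1, by rw [hst]; simp⟩
      have h1 : wlist w (s1 ++ [v]) ≤ x v := hub v _ ⟨_, hpre, rfl⟩
      have htne : t1 ≠ [] := by
        intro h
        subst h
        have hgv : l.getLast hlne = v := by
          have : l = s1 ++ [v] := hst
          subst this
          exact List.getLast_concat
        exact arc_ne hO.1 hAuv (by rw [← hlast, hgv])
      have hvtne : (v :: t1) ≠ [] := by simp
      have hglvt : (v :: t1).getLast hvtne = u := by
        have h5 : (v :: t1).getLast? = some u := by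
          rw [← List.getLast?_append_of_ne_nil s1 (l₂ := v :: t1) (by simp), ← hst]
          exact hllast
        rw [(v :: t1).getLast?_eq_getLast hvtne] at h5
        exact Option.some_injective _ h5
      have hcyc := cyc_neg hO v₀ hε hεc (v :: t1) hvtne
        (List.Nodup.sublist (by rw [hst]; exact List.sublist_append_right s1 (v :: t1)) hlnd)
        (hlch.suffix ⟨s1, hst.symm⟩)
        (by rw [hglvt]; exact hAuv)
      rw [hglvt] at hcyc
      have hhdv : (v :: t1).head hvtne = v := rfl
      rw [hhdv] at hcyc
      have hsplit : wlist w l = wlist w (s1 ++ [v]) + wlist w (v :: t1) := by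
        rw [hst]; exact wlist_split w v s1 t1
      have heq : x u + w u v = wlist w (s1 ++ [v]) + (wlist w (v :: t1) + w u v) := by
        rw [← hwl, hsplit]; ring
      rw [heq]
      linarith
    · have hext : (l ++ [v]) ∈ P v := by
        refine ⟨by simp, ?_, ?_, List.getLast?_concat⟩
        · rw [List.nodup_append]
          refine ⟨hlnd, by simp, ?_⟩
          intro a ha b hb hav
          simp only [List.mem_singleton] at hb
          subst hb
          subst hav
          exact hv ha
        · refine List.isChain_append.2 ⟨hlch, by simp, ?_⟩
          intro a ha b hb
          rw [l.getLast?_eq_getLast hlne, hlast] at ha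
          simp only [Option.mem_def, Option.some.injEq, List.head?_cons] at ha hb
          rw [← ha, ← hb]
          exact hAuv
      have hwcat : wlist w (l ++ [v]) = wlist w l + w u v := by
        rw [wlist_concat w v l hlne, hlast]
      calc x u + w u v = wlist w (l ++ [v]) := by rw [← hwl, hwcat]
        _ ≤ x v := hub v _ ⟨_, hext, rfl⟩
  refine ⟨x, ?_, ?_⟩
  · intro u v hOuv
    have hk := key u v (Or.inl hOuv)
    have hwuv : w u v = 1 + ε := if_pos hOuv
    rw [hwuv] at hk
    linarith
  · intro u v hb
    have h1 := key u v (Or.inr hb)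
    have h2 := key v u (Or.inr ⟨hb.1.symm, hb.2.2, hb.2.1⟩)
    have hw1 : w u v = -1 + ε := if_neg hb.2.1
    have hw2 : w v u = -1 + ε := if_neg hb.2.2
    rw [hw1] at h1
    rw [hw2] at h2
    rw [abs_lt]
    constructor <;> linarith

def orientOf {V : Type*} (G : SimpleGraph V) (v₀ : V) (x : {v : V // v ≠ v₀} → ℝ) :
    V → V → Prop :=
  fun u v => (u = v₀ ∧ G.Adj v₀ v) ∨
    ∃ (hu : u ≠ v₀) (hv : v ≠ v₀), G.Adj u v ∧ x ⟨v, hv⟩ - x ⟨u, hu⟩ > 1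

lemma orientOf_partial {G : SimpleGraph V} {v₀ : V} (x : {v : V // v ≠ v₀} → ℝ) :
    IsPartialOrientation G (orientOf G v₀ x) := by
  intro u v h
  rcases h with ⟨hu0, hadj⟩ | ⟨hu, hv, hadj, hgt⟩
  · subst hu0
    refine ⟨hadj, ?_⟩
    rintro (⟨hv0, hadj'⟩ | ⟨hv, hu', hadj', hgt'⟩)
    · rw [hv0] at hadj; exact G.irrefl hadj
    · exact hu' rfl
  · refine ⟨hadj, ?_⟩
    rintro (⟨hv0, _⟩ | ⟨hv', hu', hadj', hgt'⟩)
    · exact hv hv0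
    · have e1 : x ⟨v, hv'⟩ = x ⟨v, hv⟩ := rfl
      have e2 : x ⟨u, hu'⟩ = x ⟨u, hu⟩ := rfl
      rw [e1, e2] at hgt'
      linarith

lemma orientOf_source {G : SimpleGraph V} {v₀ : V} (x : {v : V // v ≠ v₀} → ℝ) :
    ∀ v, G.Adj v₀ v → orientOf G v₀ x v₀ v := fun v h => Or.inl ⟨rfl, h⟩

lemma rho0_subset_compl {G : SimpleGraph V} {v₀ : V} {O : V → V → Prop}
    (hO : IsPartialOrientation G O) :
    rho0 G v₀ O ⊆ (hyperplanesUnion0 G v₀)ᶜ := by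
  intro x hx hmem
  obtain ⟨u, v, hadj, heq⟩ := hmem
  by_cases h1 : O u.1 v.1
  · have := hx.1 u v h1; linarith
  by_cases h2 : O v.1 u.1
  · have := hx.1 v u h2; linarith
  · have := hx.2 u v ⟨hadj, h1, h2⟩
    rw [abs_lt] at this
    linarith [this.2]

lemma mem_rho0_orientOf {G : SimpleGraph V} {v₀ : V} {x : {v : V // v ≠ v₀} → ℝ}
    (hx : x ∉ hyperplanesUnion0 G v₀) : x ∈ rho0 G v₀ (orientOf G v₀ x) := by
  constructor
  · intro u v h
    rcases h with ⟨hu0, _⟩ | ⟨hu, hv, hadj, hgt⟩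
    · exact absurd hu0 u.2
    · exact hgt
  · intro u v hb
    obtain ⟨hadj, hnuv, hnvu⟩ := hb
    have h1 : ¬ (x v - x u > 1) := fun h => hnuv (Or.inr ⟨u.2, v.2, hadj, h⟩)
    have h2 : ¬ (x u - x v > 1) := fun h => hnvu (Or.inr ⟨v.2, u.2, hadj.symm, h⟩)
    have h3 : x u - x v ≠ 1 := fun h => hx ⟨u, v, hadj, h⟩
    have h4 : x v - x u ≠ 1 := fun h => hx ⟨v, u, hadj.symm, h⟩
    rw [abs_lt]
    constructor
    · have := lt_of_le_of_ne (not_lt.1 h1) h4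
      linarith
    · exact lt_of_le_of_ne (not_lt.1 h2) h3

lemma eq_orientOf_of_mem_rho0 {G : SimpleGraph V} {v₀ : V} {O : V → V → Prop}
    (hO : IsPartialOrientation G O) (hsrc : ∀ v, G.Adj v₀ v → O v₀ v)
    {x : {v : V // v ≠ v₀} → ℝ} (hx : x ∈ rho0 G v₀ O) :
    O = orientOf G v₀ x := by
  funext u v
  apply propext
  constructor
  · intro h
    have hadj := (hO u v h).1
    by_cases hu : u = v₀
    · exact Or.inl ⟨hu, hu ▸ hadj⟩
    · have hv : v ≠ v₀ := by
        intro hv0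
        subst hv0
        exact (hO u v h).2 (hsrc u hadj.symm)
      exact Or.inr ⟨hu, hv, hadj, hx.1 ⟨u, hu⟩ ⟨v, hv⟩ h⟩
  · rintro (⟨hu0, hadj⟩ | ⟨hu, hv, hadj, hgt⟩)
    · rw [hu0]; exact hsrc v hadj
    · by_contra hnuv
      by_cases hvu : O v u
      · have := hx.1 ⟨v, hv⟩ ⟨u, hu⟩ hvu
        linarith
      · have := hx.2 ⟨u, hu⟩ ⟨v, hv⟩ ⟨hadj, hnuv, hvu⟩
        rw [abs_lt] at this
        linarith [this.1]

lemma orientOf_semiorientation {G : SimpleGraph V} {v₀ : V} {x : {v : V // v ≠ v₀} → ℝ}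
    (hx : x ∉ hyperplanesUnion0 G v₀) :
    IsSemiorientation G (orientOf G v₀ x) := by
  classical
  refine ⟨orientOf_partial x, ?_⟩
  intro n c hn3 hinj hadj hnorev
  haveI : NeZero n := ⟨by omega⟩
  have hne0 : ∀ i, c i ≠ v₀ := by
    intro i hi
    apply hnorev (i - 1)
    have h1 : i - 1 + 1 = i := by ring
    rw [h1, hi]
    have h2 : G.Adj (c (i - 1)) v₀ := by
      have := hadj (i - 1)
      rw [h1, hi] at this
      exact this
    exact Or.inl ⟨rfl, h2.symm⟩
  set y : ZMod n → ℝ := fun i => x ⟨c i, hne0 i⟩ with hy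
  have hor : ∀ i, orientOf G v₀ x (c i) (c (i + 1)) ↔ y (i + 1) - y i > 1 := by
    intro i
    constructor
    · rintro (⟨h0, _⟩ | ⟨hu, hv, _, hgt⟩)
      · exact absurd h0 (hne0 i)
      · exact hgt
    · intro h
      exact Or.inr ⟨hne0 i, hne0 (i + 1), hadj i, h⟩
  have hbl : ∀ i, IsBlank G (orientOf G v₀ x) (c i) (c (i + 1)) ↔ ¬ (y (i + 1) - y i > 1) := by
    intro i
    constructor
    · intro hb h
      exact hb.2.1 ((hor i).2 h)
    · intro h
      exact ⟨hadj i, fun ho => h ((hor i).1 ho), hnorev i⟩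
  have hlow : ∀ i, ¬ (y (i + 1) - y i > 1) → y (i + 1) - y i > -1 := by
    intro i h
    have hnrev : ¬ (y i - y (i + 1) > 1) := by
      intro hr
      exact hnorev i (Or.inr ⟨hne0 (i + 1), hne0 i, (hadj i).symm, hr⟩)
    have hne1' : y i - y (i + 1) ≠ 1 :=
      fun hh => hx ⟨⟨c i, hne0 i⟩, ⟨c (i + 1), hne0 (i + 1)⟩, hadj i, hh⟩
    have := lt_of_le_of_ne (not_lt.1 hnrev) hne1'
    linarith
  set s : Finset (ZMod n) := Finset.univ.filter (fun i => y (i + 1) - y i > 1) with hs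
  have h1 : {i : ZMod n | orientOf G v₀ x (c i) (c (i + 1))}.ncard = s.card := by
    rw [← Set.ncard_coe_finset]
    congr 1
    ext i
    simp [hs, hor i]
  have h2 : {i : ZMod n | IsBlank G (orientOf G v₀ x) (c i) (c (i + 1))}.ncard = sᶜ.card := by
    rw [← Set.ncard_coe_finset]
    congr 1
    ext i
    simp [hs, hbl i]
  rw [h1, h2]
  have hocard : s.card ≤ n := by
    calc s.card ≤ Finset.univ.card := Finset.card_le_univ s
    _ = n := by rw [Finset.card_univ, ZMod.card]
  have hsum0 : ∑ i : ZMod n, (y (i + 1) - y i) = 0 := by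
    rw [Finset.sum_sub_distrib]
    have he : ∑ i : ZMod n, y (i + 1) = ∑ i : ZMod n, y i :=
      Fintype.sum_equiv (Equiv.addRight (1 : ZMod n)) _ _ (fun i => rfl)
    rw [he, sub_self]
  have hlb : ∑ i : ZMod n, (if i ∈ s then (1 : ℝ) else -1) < ∑ i : ZMod n, (y (i + 1) - y i) := by
    apply Finset.sum_lt_sum_of_nonempty
    · exact Finset.univ_nonempty
    · intro i _
      by_cases hi : i ∈ s
      · simp only [if_pos hi]
        rw [hs, Finset.mem_filter] at hi
        exact hi.2
      · simp only [if_neg hi]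
        rw [hs, Finset.mem_filter] at hi
        push_neg at hi
        exact hlow i (not_lt.2 (hi (Finset.mem_univ i)))
  have hsplit : ∑ i : ZMod n, (if i ∈ s then (1 : ℝ) else -1)
      = (s.card : ℝ) * 1 + (sᶜ.card : ℝ) * (-1) := by
    rw [← Finset.sum_filter_add_sum_filter_not Finset.univ (fun i => i ∈ s)]
    have e1 : Finset.univ.filter (fun i : ZMod n => i ∈ s) = s := by
      ext i; simp
    have e2 : Finset.univ.filter (fun i : ZMod n => ¬ i ∈ s) = sᶜ := by
      ext i; simp
    rw [e1, e2]
    rw [Finset.sum_congr rfl (fun i hi => if_pos (by simpa using hi)),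
        Finset.sum_congr rfl (fun i hi => if_neg (by simpa using hi)),
        Finset.sum_const, Finset.sum_const, nsmul_eq_mul, nsmul_eq_mul]
  rw [hsum0, hsplit] at hlb
  have hcompl : (sᶜ.card : ℕ) = n - s.card := by
    rw [Finset.card_compl, ZMod.card]
  rw [hcompl] at hlb
  have hc : ((n - s.card : ℕ) : ℝ) = (n : ℝ) - s.card := by
    push_cast [Nat.cast_sub hocard]
    ring
  rw [hc] at hlb
  have hreal : (s.card : ℝ) < ((n - s.card : ℕ) : ℝ) := by
    rw [hc]
    linarith
  have hnat : s.card < n - s.card := by exact_mod_cast hreal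
  rw [hcompl]
  exact hnat

lemma rho0_isOpen [Finite V] {G : SimpleGraph V} {v₀ : V} (O : V → V → Prop) :
    IsOpen (rho0 G v₀ O) := by
  classical
  have he : rho0 G v₀ O =
      (⋂ (u : {v : V // v ≠ v₀}) (v : {v : V // v ≠ v₀}),
        {x : {v : V // v ≠ v₀} → ℝ | O u.1 v.1 → x v - x u > 1}) ∩
      (⋂ (u : {v : V // v ≠ v₀}) (v : {v : V // v ≠ v₀}),
        {x : {v : V // v ≠ v₀} → ℝ | IsBlank G O u.1 v.1 → |x u - x v| < 1}) := by
    ext x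
    simp only [rho0, Set.mem_inter_iff, Set.mem_iInter, Set.mem_setOf_eq]
  rw [he]
  apply IsOpen.inter
  · apply isOpen_iInter_of_finite
    intro u
    apply isOpen_iInter_of_finite
    intro v
    by_cases h : O u.1 v.1
    · simp only [h, forall_const]
      exact isOpen_lt continuous_const ((continuous_apply v).sub (continuous_apply u))
    · have : {x : {v : V // v ≠ v₀} → ℝ | O u.1 v.1 → x v - x u > 1} = Set.univ := by
        ext z; simp [h]
      rw [this]
      exact isOpen_univ
  · apply isOpen_iInter_of_finite
    intro u
    apply isOpen_iInter_of_finite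
    intro v
    by_cases h : IsBlank G O u.1 v.1
    · simp only [h, forall_const]
      exact isOpen_lt ((continuous_apply u).sub (continuous_apply v)).abs continuous_const
    · have : {x : {v : V // v ≠ v₀} → ℝ | IsBlank G O u.1 v.1 → |x u - x v| < 1} = Set.univ := by
        ext z; simp [h]
      rw [this]
      exact isOpen_univ

lemma convex_aux {a b s t c : ℝ} (ha : 0 ≤ a) (hb : 0 ≤ b) (hab : a + b = 1)
    (hs : c < s) (ht : c < t) : c < a * s + b * t := by
  rcases eq_or_lt_of_le ha with h | h
  · have hb1 : b = 1 := by linarith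
    rw [← h, hb1]
    simpa using ht
  · have e : a * c + b * c = c := by rw [← add_mul, hab, one_mul]
    nlinarith [mul_lt_mul_of_pos_left hs h, mul_le_mul_of_nonneg_left ht.le hb, e]

lemma rho0_convex {G : SimpleGraph V} {v₀ : V} (O : V → V → Prop) :
    Convex ℝ (rho0 G v₀ O) := by
  intro p hp q hq a b ha hb hab
  constructor
  · intro u v h
    have h1 := hp.1 u v h
    have h2 := hq.1 u v h
    simp only [Pi.add_apply, Pi.smul_apply, smul_eq_mul]
    have := convex_aux ha hb hab h1 h2
    nlinarith
  · intro u v h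
    have h1 := hp.2 u v h
    have h2 := hq.2 u v h
    simp only [Pi.add_apply, Pi.smul_apply, smul_eq_mul]
    rw [abs_lt] at h1 h2 ⊢
    constructor
    · have := convex_aux ha hb hab h1.1 h2.1
      nlinarith
    · have h1' : (-1 : ℝ) < p v - p u := by linarith [h1.2]
      have h2' : (-1 : ℝ) < q v - q u := by linarith [h2.2]
      have := convex_aux ha hb hab h1' h2'
      nlinarith

lemma rho0_orientOf_eq_component [Fintype V] {G : SimpleGraph V} {v₀ : V}
    {x : {v : V // v ≠ v₀} → ℝ} (hx : x ∉ hyperplanesUnion0 G v₀) :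
    rho0 G v₀ (orientOf G v₀ x) = connectedComponentIn (hyperplanesUnion0 G v₀)ᶜ x := by
  have hxm := mem_rho0_orientOf hx
  have hsub : rho0 G v₀ (orientOf G v₀ x) ⊆ (hyperplanesUnion0 G v₀)ᶜ :=
    rho0_subset_compl (orientOf_partial x)
  apply Set.Subset.antisymm
  · exact ((rho0_convex _).isPreconnected).subset_connectedComponentIn hxm hsub
  · set F := (hyperplanesUnion0 G v₀)ᶜ with hF
    set C := connectedComponentIn F x with hC
    have hCF : C ⊆ F := connectedComponentIn_subset F x
    set U := rho0 G v₀ (orientOf G v₀ x) with hU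
    by_contra hnsub
    obtain ⟨z0, hz0C, hz0U⟩ := Set.not_subset.1 hnsub
    set W := ⋃ (y : {y : ({v : V // v ≠ v₀} → ℝ) // y ∈ C ∧ y ∉ U}),
      rho0 G v₀ (orientOf G v₀ y.1) with hW
    have hWopen : IsOpen W := isOpen_iUnion (fun y => rho0_isOpen _)
    have hCsub : C ⊆ U ∪ W := by
      intro z hz
      by_cases hzU : z ∈ U
      · exact Or.inl hzU
      · refine Or.inr (Set.mem_iUnion.2 ⟨⟨z, hz, hzU⟩, ?_⟩)
        exact mem_rho0_orientOf (hCF hz)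
    have hdisj : ∀ z, z ∈ C → z ∈ U → z ∈ W → False := by
      intro z hzC hzU hzW
      obtain ⟨⟨y, hyC, hyU⟩, hzy⟩ := Set.mem_iUnion.1 hzW
      have e1 : orientOf G v₀ x = orientOf G v₀ z :=
        eq_orientOf_of_mem_rho0 (orientOf_partial x) (orientOf_source x) hzU
      have e2 : orientOf G v₀ y = orientOf G v₀ z :=
        eq_orientOf_of_mem_rho0 (orientOf_partial y) (orientOf_source y) hzy
      have hyU' : y ∈ U := by
        rw [hU, e1, ← e2]
        exact mem_rho0_orientOf (hCF hyC)
      exact hyU hyU'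
    have hpc : IsPreconnected C := isPreconnected_connectedComponentIn
    have hxC : x ∈ C := mem_connectedComponentIn hx
    have hz0W : z0 ∈ W := (hCsub hz0C).resolve_left hz0U
    obtain ⟨z, hzC, hzU, hzW⟩ := hpc U W (rho0_isOpen _) hWopen hCsub
      ⟨x, hxC, hxm⟩ ⟨z0, hz0C, hz0W⟩
    exact hdisj z hzC hzU hzW

/-- Fix `v₀ ∈ V`.  The map `ρ₀` is a bijection from the set of `G`-semiorientations
in which `v₀` is a source onto the set of regions of the `(G,v₀)`-semiorder
arrangement. -/
theorem stmt19 {V : Type*} [Fintype V] (G : SimpleGraph V) (hconn : G.Connected)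
    (v₀ : V) :
    Set.BijOn (rho0 G v₀)
      {O : V → V → Prop | IsSemiorientation G O ∧ ∀ v, G.Adj v₀ v → O v₀ v}
      (Regions0 G v₀) := by
  classical
  refine ⟨?_, ?_, ?_⟩
  · rintro O ⟨hO, hsrc⟩
    obtain ⟨x, hx⟩ := exists_mem_rho0 hO v₀
    have hxc : x ∉ hyperplanesUnion0 G v₀ := rho0_subset_compl hO.1 hx
    have he : O = orientOf G v₀ x := eq_orientOf_of_mem_rho0 hO.1 hsrc hx
    exact ⟨x, hxc, by rw [he, rho0_orientOf_eq_component hxc]⟩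
  · rintro O₁ ⟨hO₁, hs₁⟩ O₂ ⟨hO₂, hs₂⟩ heq
    obtain ⟨x, hx1⟩ := exists_mem_rho0 hO₁ v₀
    have hx2 : x ∈ rho0 G v₀ O₂ := heq ▸ hx1
    rw [eq_orientOf_of_mem_rho0 hO₁.1 hs₁ hx1, eq_orientOf_of_mem_rho0 hO₂.1 hs₂ hx2]
  · rintro r ⟨x, hx, rfl⟩
    exact ⟨orientOf G v₀ x, ⟨orientOf_semiorientation hx, orientOf_source x⟩,
      rho0_orientOf_eq_component hx⟩

end Soap
end
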